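/- Assume K = k_i + k_j = 4, and let w = (x⁻¹, (k_l/2)·x⁻²) ∈ V. Then E(w) ∈ B, F(w) ∈ B, w ∉ B, and every z ∈ V with E(z) ∈ B and F(z) ∈ B satisfies z ∈ ℂ·w + B. In other words, the 𝔰-invariant part of H¹(ℂℙ¹, T₂^{ij}) is one-dimensional, spanned by the class of w. -/

import Mathlib

noncomputable section

open LaurentPolynomial

/-- `L = ℂ[x, x⁻¹]`, the Laurent polynomials over `ℂ`. -/
abbrev L : Type := LaurentPolynomial ℂ

/-- The coefficient of `x^n` in a Laurent polynomial. -/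
def coeffL (p : L) (n : ℤ) : ℂ := (AddMonoidAlgebra.coeff p : ℤ →₀ ℂ) n

lemma coeffL_zero (n : ℤ) : coeffL 0 n = 0 := rfl

lemma coeffL_add (a b : L) (n : ℤ) : coeffL (a + b) n = coeffL a n + coeffL b n := by
  unfold coeffL; erw [Finsupp.add_apply]; rfl

lemma coeffL_smul (c : ℂ) (a : L) (n : ℤ) : coeffL (c • a) n = c * coeffL a n := by
  unfold coeffL; erw [Finsupp.smul_apply]; rfl

/-- `L₊`: Laurent polynomials involving only nonnegative powers of `x`. -/
def Lplus : Submodule ℂ L where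
  carrier := {p | ∀ n : ℤ, n < 0 → coeffL p n = 0}
  zero_mem' := fun n _ => coeffL_zero n
  add_mem' := by intro a b ha hb n hn; rw [coeffL_add, ha n hn, hb n hn, add_zero]
  smul_mem' := by intro c p hp n hn; rw [coeffL_smul, hp n hn, mul_zero]

/-- `L₋`: Laurent polynomials involving only nonpositive powers of `x`. -/
def Lminus : Submodule ℂ L where
  carrier := {p | ∀ n : ℤ, 0 < n → coeffL p n = 0}
  zero_mem' := fun n _ => coeffL_zero n
  add_mem' := by intro a b ha hb n hn; rw [coeffL_add, ha n hn, hb n hn, add_zero]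
  smul_mem' := by intro c p hp n hn; rw [coeffL_smul, hp n hn, mul_zero]

/-- The derivative `d/dx` on Laurent polynomials. -/
def D (p : L) : L := Finsupp.sum (AddMonoidAlgebra.coeff p : ℤ →₀ ℂ) fun n a => ((n : ℂ) * a) • T (n - 1)

/-- `V = L × L`, the model of Čech 1-cochains with values in `T₂^{ij}`:
a pair `(a, b)` encodes `a(x)ξᵢξⱼ∂/∂x + b(x)ξᵢξⱼξₗ∂/∂ξₗ` on `U₀ ∩ U₁`. -/
abbrev V : Type := L × L

/-- `B₀ = L₊ × L₊`: cochains holomorphic in `U₀`. -/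
def B0 : Submodule ℂ V := Lplus.prod Lplus

/-- `B₁`: cochains holomorphic in `U₁`, i.e. pairs `(a, b)` with
`x^(K-2)·a ∈ L₋` and `x^K·(b - kl·x⁻¹·a) ∈ L₋`. -/
def B1 (K kl : ℤ) : Submodule ℂ V :=
  Lminus.comap ((LinearMap.mulLeft ℂ (T (K - 2))).comp (LinearMap.fst ℂ L L)) ⊓
  Lminus.comap ((LinearMap.mulLeft ℂ (T K)).comp
    (LinearMap.snd ℂ L L - (kl : ℂ) • (LinearMap.mulLeft ℂ (T (-1))).comp (LinearMap.fst ℂ L L)))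

/-- The coboundary subspace `B = B₀ + B₁`. -/
def B (K kl : ℤ) : Submodule ℂ V := B0 ⊔ B1 K kl

/-- Action of `e = ∂/∂x` on cocycles: `E(a, b) = (a′, b′)`. -/
def Eop : V → V := fun p => (D p.1, D p.2)

/-- Action of `f = ∂/∂y` on cocycles:
`F(a, b) = ((2−K)·x·a − x²·a′, kl·a − K·x·b − x²·b′)`. -/
def Fop (K kl : ℤ) : V → V := fun p =>
  (((2 - K : ℤ) : ℂ) • (T 1 * p.1) - T 2 * D p.1,
   (kl : ℂ) • p.1 - (K : ℂ) • (T 1 * p.2) - T 2 * D p.2)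

/-!
Since `K > 2`, a cochain lies in `B = B₀ + B₁` exactly when its polar part lies in `B₁`, so for
`K = 4` membership in `B` amounts to four linear conditions on the coefficients of `x⁻¹, x⁻², x⁻³`.
Reading off `E(z)` and `F(z)` coefficientwise, invariance of `z = (a, b)` becomes
`b₋₁ = 0`, `2 b₋₂ = k_l a₋₁` and `b₋₃ = k_l a₋₂`; these leave exactly `a₋₁` free, and
`z - a₋₁ w` satisfies the conditions for `B`.
-/

lemma coeffL_sub (a b : L) (n : ℤ) : coeffL (a - b) n = coeffL a n - coeffL b n := rfl

lemma coeffL_T (m n : ℤ) : coeffL (T m) n = if m = n then 1 else 0 :=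
  LaurentPolynomial.T_apply n m

lemma coeffL_T_mul (m : ℤ) (p : L) (n : ℤ) : coeffL (T m * p) n = coeffL p (n - m) := by
  unfold coeffL
  rw [show T m = AddMonoidAlgebra.single m (1 : ℂ) from rfl,
    AddMonoidAlgebra.coeff_single_mul_apply, one_mul, neg_add_eq_sub]

lemma coeffL_D (p : L) (n : ℤ) : coeffL (D p) n = ((n + 1 : ℤ) : ℂ) * coeffL p (n + 1) := by
  have hterm (m : ℤ) (a : ℂ) :
      coeffL (((m : ℂ) * a) • T (m - 1)) n = if m = n + 1 then (m : ℂ) * a else 0 := by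
    rw [coeffL_smul, coeffL_T]
    by_cases hm : m = n + 1
    · rw [if_pos (by omega), if_pos hm, mul_one]
    · rw [if_neg (by omega), if_neg hm, mul_zero]
  have hsum (s : Finset ℤ) (f : ℤ → L) : coeffL (∑ m ∈ s, f m) n = ∑ m ∈ s, coeffL (f m) n :=
    map_sum ((Finsupp.lapply n).comp (AddMonoidAlgebra.coeffLinearEquiv ℂ).toLinearMap) f s
  rw [D, Finsupp.sum, hsum, Finset.sum_congr rfl fun m _ => hterm m _, Finset.sum_ite_eq']
  split_ifs with hmem
  · rfl
  · rw [show coeffL p (n + 1) = 0 from Finsupp.notMem_support_iff.mp hmem, mul_zero]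

lemma coeffL_Fop_fst (K kl : ℤ) (z : V) (n : ℤ) :
    coeffL (Fop K kl z).1 n = (3 - K - n : ℤ) * coeffL z.1 (n - 1) := by
  simp only [Fop, coeffL_sub, coeffL_smul, coeffL_T_mul, coeffL_D]
  push_cast; ring_nf

lemma coeffL_Fop_snd (K kl : ℤ) (z : V) (n : ℤ) :
    coeffL (Fop K kl z).2 n = kl * coeffL z.1 n - (K + n - 1 : ℤ) * coeffL z.2 (n - 1) := by
  simp only [Fop, coeffL_sub, coeffL_smul, coeffL_T_mul, coeffL_D]
  push_cast; ring_nf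

def truncL (k : ℤ) (p : L) : L :=
  AddMonoidAlgebra.ofCoeff ((AddMonoidAlgebra.coeff p).filter (· ≤ k))

lemma coeffL_truncL (k : ℤ) (p : L) (n : ℤ) :
    coeffL (truncL k p) n = if n ≤ k then coeffL p n else 0 :=
  Finsupp.filter_apply _ _ _

lemma mem_B1_iff (K kl : ℤ) (z : V) :
    z ∈ B1 K kl ↔ (∀ n : ℤ, 0 < n → coeffL z.1 (n - (K - 2)) = 0) ∧
      (∀ n : ℤ, 0 < n → coeffL z.2 (n - K) = kl * coeffL z.1 (n - K + 1)) := by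
  simp only [B1, Submodule.mem_inf, Submodule.mem_comap, LinearMap.comp_apply,
    LinearMap.mulLeft_apply, LinearMap.fst_apply, LinearMap.snd_apply, LinearMap.sub_apply,
    LinearMap.smul_apply, Lminus, Submodule.mem_mk, AddSubmonoid.mem_mk, AddSubsemigroup.mem_mk,
    Set.mem_ofPred_eq, coeffL_T_mul, coeffL_sub, coeffL_smul, sub_neg_eq_add, sub_eq_zero]

lemma mem_B_iff_truncL_mem_B1 {K : ℤ} (hK : 2 < K) (kl : ℤ) (z : V) :
    z ∈ B K kl ↔ (truncL (-1) z.1, truncL (-1) z.2) ∈ B1 K kl := by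
  constructor
  · intro hz
    obtain ⟨y, ⟨hy₁, hy₂⟩, u, hu, rfl⟩ := Submodule.mem_sup.1 hz
    obtain ⟨hu₁, hu₂⟩ := (mem_B1_iff K kl u).1 hu
    have h₁ (m : ℤ) (hm : m < 0) : coeffL (y + u).1 m = coeffL u.1 m := by
      rw [Prod.fst_add, coeffL_add, hy₁ m hm, zero_add]
    have h₂ (m : ℤ) (hm : m < 0) : coeffL (y + u).2 m = coeffL u.2 m := by
      rw [Prod.snd_add, coeffL_add, hy₂ m hm, zero_add]
    rw [mem_B1_iff]
    simp only [coeffL_truncL]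
    refine ⟨fun n hn => ?_, fun n hn => ?_⟩
    · split_ifs with hm
      · rw [h₁ _ (by omega), hu₁ n hn]
      · rfl
    · by_cases hm : n - K ≤ -2
      · rw [if_pos (by omega : n - K ≤ -1), if_pos (by omega : n - K + 1 ≤ -1),
          h₁ _ (by omega), h₂ _ (by omega), hu₂ n hn]
      · have hu₁₀ : coeffL u.1 0 = 0 := by simpa using hu₁ (K - 2) (by omega)
        rw [if_neg (by omega : ¬n - K + 1 ≤ -1), mul_zero]
        split_ifs
        · rw [h₂ _ (by omega), hu₂ n hn, show n - K + 1 = 0 by omega, hu₁₀, mul_zero]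
        · rfl
  · intro ht
    refine Submodule.mem_sup.2 ⟨z - (truncL (-1) z.1, truncL (-1) z.2), ⟨?_, ?_⟩, _, ht,
      sub_add_cancel _ _⟩ <;>
    · intro n hn
      simp only [Prod.fst_sub, Prod.snd_sub, coeffL_sub, coeffL_truncL, if_pos (by omega : n ≤ -1),
        sub_self]

lemma mem_B_four_iff (kl : ℤ) (z : V) :
    z ∈ B 4 kl ↔ coeffL z.1 (-1) = 0 ∧ coeffL z.2 (-1) = 0 ∧ coeffL z.2 (-2) = 0 ∧
      coeffL z.2 (-3) = kl * coeffL z.1 (-2) := by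
  rw [mem_B_iff_truncL_mem_B1 (by norm_num), mem_B1_iff]
  simp only [coeffL_truncL]
  constructor
  · rintro ⟨h₁, h₂⟩
    have h₁₁ := h₁ 1 one_pos
    have h₂₁ := h₂ 1 one_pos
    have h₂₂ := h₂ 2 two_pos
    have h₂₃ := h₂ 3 three_pos
    norm_num at h₁₁ h₂₁ h₂₂ h₂₃
    exact ⟨h₁₁, h₂₃, by rw [h₂₂, h₁₁, mul_zero], h₂₁⟩
  · rintro ⟨ha₁, hb₁, hb₂, hb₃⟩
    refine ⟨fun n hn => ?_, fun n hn => ?_⟩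
    · split_ifs with hm
      · rwa [show n - (4 - 2) = -1 by omega]
      · rfl
    · obtain rfl | rfl | rfl | hn4 : n = 1 ∨ n = 2 ∨ n = 3 ∨ 4 ≤ n := by omega
      · norm_num [hb₃]
      · norm_num [hb₂, ha₁]
      · norm_num [hb₁]
      · rw [if_neg (by omega), if_neg (by omega), mul_zero]

lemma Eop_mem_B_four_iff (kl : ℤ) (z : V) :
    Eop z ∈ B 4 kl ↔ coeffL z.2 (-1) = 0 ∧ 2 * coeffL z.2 (-2) = kl * coeffL z.1 (-1) := by
  simp only [mem_B_four_iff, Eop, coeffL_D]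
  norm_num

lemma Fop_mem_B_four_iff (kl : ℤ) (z : V) :
    Fop 4 kl z ∈ B 4 kl ↔
      2 * coeffL z.2 (-2) = kl * coeffL z.1 (-1) ∧ coeffL z.2 (-3) = kl * coeffL z.1 (-2) := by
  simp only [mem_B_four_iff, coeffL_Fop_fst, coeffL_Fop_snd]
  norm_num [sub_eq_zero]
  exact and_congr eq_comm eq_comm

theorem stmt_4_general (kl K : ℤ) (hK4 : K = 4)
    (w : V) (hw : w = (T (-1), ((kl : ℂ) / 2) • T (-2))) :
    Eop w ∈ B K kl ∧ Fop K kl w ∈ B K kl ∧ w ∉ B K kl ∧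
    ∀ z : V, Eop z ∈ B K kl → Fop K kl z ∈ B K kl →
      ∃ c : ℂ, z - c • w ∈ B K kl := by
  subst hK4 hw
  refine ⟨?_, ?_, ?_, fun z hE hF => ?_⟩
  · rw [Eop_mem_B_four_iff]
    norm_num [coeffL_smul, coeffL_T, mul_div_cancel₀]
  · rw [Fop_mem_B_four_iff]
    norm_num [coeffL_smul, coeffL_T, mul_div_cancel₀]
  · rw [mem_B_four_iff]
    norm_num [coeffL_T]
  · obtain ⟨hb₁, hb₂⟩ := (Eop_mem_B_four_iff kl z).1 hE
    obtain ⟨-, hb₃⟩ := (Fop_mem_B_four_iff kl z).1 hF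
    refine ⟨coeffL z.1 (-1), (mem_B_four_iff kl _).2 ?_⟩
    simp only [Prod.fst_sub, Prod.snd_sub, Prod.smul_fst, Prod.smul_snd, coeffL_sub, coeffL_smul,
      coeffL_T]
    norm_num
    exact ⟨hb₁, by linear_combination hb₂ / 2, hb₃⟩

/-- If `K = kᵢ + kⱼ = 4`, the 𝔰-invariant part of `H¹(ℂℙ¹, T₂^{ij})` is
one-dimensional, spanned by the class of `w = (x⁻¹, (kl/2)·x⁻²)`. -/
theorem stmt_4 (ki kj kl K : ℤ) (hK : K = ki + kj) (hK4 : K = 4)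
    (w : V) (hw : w = (T (-1), ((kl : ℂ) / 2) • T (-2))) :
    Eop w ∈ B K kl ∧ Fop K kl w ∈ B K kl ∧ w ∉ B K kl ∧
    ∀ z : V, Eop z ∈ B K kl → Fop K kl z ∈ B K kl →
      ∃ c : ℂ, z - c • w ∈ B K kl :=
  stmt_4_general kl K hK4 w hw
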